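/- Let σ and ω be positive locally finite Borel measures on ℝⁿ, let Q ⊆ ℝⁿ be a Borel set, and suppose the set of common atoms of σ and ω contained in Q is finite of even cardinality 2N with N ≥ 1, say {p₁,…,p_{2N}}. Then {1,…,2N} can be partitioned into two sets A and B with |A| = |B| = N such that Σ_{k∈A} σ({p_k}) ≥ (1/2) Σ_{k=1}^{2N} σ({p_k}) and Σ_{k∈B} ω({p_k}) ≥ (1/2)(Σ_{k=1}^{2N} ω({p_k}) − max_{1≤k≤2N} ω({p_k})). Consequently, the measures σ̃ := 1_Q σ − Σ_{k∈B} σ({p_k}) δ_{p_k} and ω̃ := 1_Q ω − Σ_{k∈A} ω({p_k}) δ_{p_k} are nonnegative, σ̃ and ω̃ have no common atoms, σ̃(Q) ≥ (1/2) σ(Q), and ω̃(Q) ≥ (1/2) ω(Q, 𝔓_{(σ,ω)}). -/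

import Mathlib

/-!
Sort the `2N` common atoms by their `ω`-mass and pair them off consecutively,
`(q₁, q₂), (q₃, q₄), …`; from each pair send the atom of larger `σ`-mass to `A` and the other
to `B`. Then `σ(A) ≥ σ(B)`. Every `A`-atom weighs (in `ω`) at most the larger member of its
pair, which in turn weighs at most the smaller member of the next pair, so
`ω(A) ≤ ω(B) + max ω({p_k})`. Removing the `B`-atoms from `1_Q σ` and the `A`-atoms from
`1_Q ω` leaves no common atom, and the two mass inequalities give the two lower bounds.
-/

open MeasureTheory
open scoped ENNReal NNReal

noncomputable section

/-- The set of common atoms `𝔓_{(σ,ω)}` of two measures. -/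
def commonAtoms {n : ℕ} (σ ω : Measure (EuclideanSpace ℝ (Fin n))) :
    Set (EuclideanSpace ℝ (Fin n)) :=
  {p | σ {p} ≠ 0 ∧ ω {p} ≠ 0}

open Finset

theorem ENNReal.sub_div_two_le_of_le_add {x y c : ℝ≥0∞} (h : x ≤ y + y + c) :
    (x - c) / 2 ≤ y := by
  rw [ENNReal.div_le_iff_le_mul (Or.inl two_ne_zero) (Or.inl ENNReal.ofNat_ne_top),
    tsub_le_iff_right, mul_two]
  exact h

theorem sum_sub_div_two_le_sum {ι : Type*} [Fintype ι] [DecidableEq ι] {A B : Finset ι}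
    (hAB : A ∪ B = univ) (hdisj : Disjoint A B) (g : ι → ℝ≥0∞) {c : ℝ≥0∞}
    (h : ∑ k ∈ A, g k ≤ ∑ k ∈ B, g k + c) :
    ((∑ k, g k) - c) / 2 ≤ ∑ k ∈ B, g k := by
  refine ENNReal.sub_div_two_le_of_le_add ?_
  rw [← hAB, sum_union hdisj]
  calc ∑ k ∈ A, g k + ∑ k ∈ B, g k ≤ ∑ k ∈ B, g k + c + ∑ k ∈ B, g k := by gcongr
    _ = ∑ k ∈ B, g k + ∑ k ∈ B, g k + c := add_right_comm _ _ _

theorem sum_le_sum_add_iSup_of_le_succ {m : ℕ} (u v : Fin m → ℝ≥0∞)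
    (h : ∀ i j : Fin m, (i : ℕ) + 1 = j → v i ≤ u j) :
    ∑ i, v i ≤ ∑ i, u i + ⨆ i, v i := by
  cases m with
  | zero => simp
  | succ m =>
    rw [Fin.sum_univ_castSucc, Fin.sum_univ_succ (f := u)]
    exact add_le_add (le_add_left (sum_le_sum fun i _ => h _ _ (by simp)))
      (le_iSup v _)

theorem exists_pairing_monotone {α : Type*} [LinearOrder α] (m : ℕ) (g : Fin (2 * m) → α) :
    ∃ P : Fin m × Fin 2 ≃ Fin (2 * m), ∀ x y : Fin m × Fin 2,
      2 * (x.1 : ℕ) + x.2 ≤ 2 * y.1 + y.2 → g (P x) ≤ g (P y) := by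
  refine ⟨(finProdFinEquiv.trans (finCongr (Nat.mul_comm m 2))).trans (Tuple.sort g),
    fun x y hxy => Tuple.monotone_sort g ?_⟩
  simp only [Fin.le_def, Equiv.trans_apply, finCongr_apply, Fin.val_cast,
    finProdFinEquiv_apply_val]
  omega

theorem exists_pairing_orientation {ι α : Type*} [LinearOrder α] {m : ℕ}
    (P : Fin m × Fin 2 ≃ ι) (f : ι → α) :
    ∃ E : Fin m × Fin 2 ≃ ι, (∀ i, f (E (i, 1)) ≤ f (E (i, 0))) ∧
      ∀ x, ∃ j, E x = P (x.1, j) := by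
  classical
  let c : Fin m → Equiv.Perm (Fin 2) := fun i =>
    if f (P (i, 1)) ≤ f (P (i, 0)) then 1 else Equiv.swap 0 1
  refine ⟨(Equiv.prodCongrRight c).trans P, fun i => ?_, fun x => ⟨c x.1 x.2, rfl⟩⟩
  by_cases hi : f (P (i, 1)) ≤ f (P (i, 0))
  · simp [c, hi]
  · simpa [c, hi] using (not_le.1 hi).le

section PairHalf

variable {ι : Type*} {m : ℕ}

def pairHalf (E : Fin m × Fin 2 ≃ ι) (j : Fin 2) : Finset ι :=
  univ.map ((Function.Embedding.sectL (Fin m) j).trans E.toEmbedding)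

variable (E : Fin m × Fin 2 ≃ ι)

theorem card_pairHalf (j : Fin 2) : #(pairHalf E j) = m := by
  simp [pairHalf]

theorem sum_pairHalf {M : Type*} [AddCommMonoid M] (j : Fin 2) (h : ι → M) :
    ∑ k ∈ pairHalf E j, h k = ∑ i, h (E (i, j)) := by
  simp [pairHalf]

theorem disjoint_pairHalf : Disjoint (pairHalf E 0) (pairHalf E 1) := by
  simp [pairHalf, disjoint_left]

theorem pairHalf_union [Fintype ι] [DecidableEq ι] : pairHalf E 0 ∪ pairHalf E 1 = univ := by
  refine eq_univ_of_forall fun k => ?_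
  obtain ⟨⟨i, j⟩, rfl⟩ := E.surjective k
  fin_cases j <;> simp [pairHalf]

end PairHalf

theorem exists_balanced_partition (m : ℕ) (f g : Fin (2 * m) → ℝ≥0∞) :
    ∃ A B : Finset (Fin (2 * m)), A ∪ B = univ ∧ Disjoint A B ∧ #A = m ∧ #B = m ∧
      ∑ k ∈ B, f k ≤ ∑ k ∈ A, f k ∧ ∑ k ∈ A, g k ≤ ∑ k ∈ B, g k + ⨆ k, g k := by
  classical
  obtain ⟨P, hP⟩ := exists_pairing_monotone m g
  obtain ⟨E, hEf, hEP⟩ := exists_pairing_orientation P f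
  refine ⟨pairHalf E 0, pairHalf E 1, pairHalf_union E, disjoint_pairHalf E, card_pairHalf E 0,
    card_pairHalf E 1, ?_, ?_⟩
  · simp only [sum_pairHalf]
    exact sum_le_sum fun i _ => hEf i
  · have hinterleave := sum_le_sum_add_iSup_of_le_succ (fun i => g (P (i, 0)))
      (fun i => g (P (i, 1))) fun i j hij => hP _ _ (by simp; omega)
    simp only [sum_pairHalf]
    calc ∑ i, g (E (i, 0)) ≤ ∑ i, g (P (i, 1)) := sum_le_sum fun i _ => by
            obtain ⟨j, hj⟩ := hEP (i, 0)
            exact hj ▸ hP _ _ (by simp; omega)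
      _ ≤ ∑ i, g (P (i, 0)) + ⨆ i, g (P (i, 1)) := hinterleave
      _ ≤ ∑ i, g (E (i, 1)) + ⨆ k, g k := by
          refine add_le_add (sum_le_sum fun i _ => ?_) (iSup_le fun i => le_iSup g _)
          obtain ⟨j, hj⟩ := hEP (i, 1)
          exact hj ▸ hP _ _ (by simp)

section FiniteImage

variable {α ι : Type*} [MeasurableSpace α] [MeasurableSingletonClass α] (μ : Measure α)
  {p : ι → α}

theorem restrict_image_finset_eq_sum_dirac (hp : Function.Injective p) (s : Finset ι) :
    μ.restrict (p '' s) = ∑ k ∈ s, μ {p k} • Measure.dirac (p k) := by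
  classical
  induction s using Finset.induction_on with
  | empty => simp
  | insert a s ha ih =>
    have hdisj : Disjoint {p a} (p '' s) := by
      simpa [Set.disjoint_singleton_left, hp.eq_iff] using ha
    rw [coe_insert, Set.image_insert_eq, Set.insert_eq,
      Measure.restrict_union hdisj (s.finite_toSet.image p).measurableSet,
      Measure.restrict_singleton, ih, sum_insert ha]

theorem measure_image_finset (hp : Function.Injective p) (s : Finset ι) :
    μ (p '' s) = ∑ k ∈ s, μ {p k} := by
  simpa using congrArg (· Set.univ) (restrict_image_finset_eq_sum_dirac μ hp s)

theorem restrict_diff_image_add_sum_dirac (hp : Function.Injective p) {s : Finset ι} {Q : Set α}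
    (hs : p '' s ⊆ Q) :
    μ.restrict (Q \ p '' s) + ∑ k ∈ s, μ {p k} • Measure.dirac (p k) = μ.restrict Q := by
  rw [← restrict_image_finset_eq_sum_dirac μ hp,
    ← Measure.restrict_union Set.disjoint_sdiff_left (s.finite_toSet.image p).measurableSet,
    Set.sdiff_union_of_subset hs]

theorem sub_div_two_le_measure_diff_image (hp : Function.Injective p) {s t : Finset ι}
    (hst : Disjoint s t) {Q : Set α} (hs : p '' s ⊆ Q) (ht : p '' t ⊆ Q) {c : ℝ≥0∞}
    (h : ∑ k ∈ s, μ {p k} ≤ ∑ k ∈ t, μ {p k} + c) :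
    (μ Q - c) / 2 ≤ μ (Q \ p '' s) := by
  refine ENNReal.sub_div_two_le_of_le_add ?_
  have hts : p '' t ⊆ Q \ p '' s :=
    Set.subset_sdiff.2 ⟨ht, (Set.disjoint_image_iff hp).2 (disjoint_coe.2 hst.symm)⟩
  calc μ Q = μ (Q \ p '' s) + ∑ k ∈ s, μ {p k} := by
        rw [← measure_image_finset μ hp, ← measure_union Set.disjoint_sdiff_left
          (s.finite_toSet.image p).measurableSet, Set.sdiff_union_of_subset hs]
    _ ≤ μ (Q \ p '' s) + (μ (p '' t) + c) := by rw [measure_image_finset μ hp]; gcongr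
    _ ≤ μ (Q \ p '' s) + μ (Q \ p '' s) + c := by rw [add_assoc]; gcongr

end FiniteImage

theorem MeasureTheory.Measure.restrict_apply_singleton {α : Type*} [MeasurableSpace α]
    [MeasurableSingletonClass α] (μ : Measure α) (S : Set α) (q : α) :
    μ.restrict S {q} = S.indicator (fun x => μ {x}) q := by
  by_cases hq : q ∈ S
  · simp [Measure.restrict_apply, hq, Set.singleton_inter_of_mem]
  · simp [Measure.restrict_apply, hq, Set.singleton_inter_eq_empty.2 hq]

theorem commonAtoms_restrict {n : ℕ} (σ ω : Measure (EuclideanSpace ℝ (Fin n)))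
    (S T : Set (EuclideanSpace ℝ (Fin n))) :
    commonAtoms (σ.restrict S) (ω.restrict T) = S ∩ T ∩ commonAtoms σ ω := by
  ext q
  simp only [commonAtoms, Measure.restrict_apply_singleton, Set.indicator_apply_ne_zero,
    Set.mem_ofPred_eq, Set.mem_inter_iff]
  tauto

theorem statement2 (n N : ℕ)
    (σ ω : Measure (EuclideanSpace ℝ (Fin n)))
    (Q : Set (EuclideanSpace ℝ (Fin n)))
    (p : Fin (2 * N) → EuclideanSpace ℝ (Fin n)) (hp : Function.Injective p)
    (hpQ : Q ∩ commonAtoms σ ω = Set.range p) :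
    ∃ A B : Finset (Fin (2 * N)),
      A ∪ B = Finset.univ ∧ Disjoint A B ∧ A.card = N ∧ B.card = N ∧
      (∑ k : Fin (2 * N), σ {p k}) / 2 ≤ ∑ k ∈ A, σ {p k} ∧
      ((∑ k : Fin (2 * N), ω {p k}) - ⨆ k, ω {p k}) / 2 ≤ ∑ k ∈ B, ω {p k} ∧
      ∃ σt ωt : Measure (EuclideanSpace ℝ (Fin n)),
        σt + (∑ k ∈ B, σ {p k} • Measure.dirac (p k)) = σ.restrict Q ∧
        ωt + (∑ k ∈ A, ω {p k} • Measure.dirac (p k)) = ω.restrict Q ∧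
        commonAtoms σt ωt = ∅ ∧
        σ Q / 2 ≤ σt Q ∧
        (ω Q - ⨆ q ∈ Q ∩ commonAtoms σ ω, ω {q}) / 2 ≤ ωt Q := by
  classical
  obtain ⟨A, B, hAB, hdisj, hA, hB, hσ, hω⟩ :=
    exists_balanced_partition N (fun k => σ {p k}) (fun k => ω {p k})
  have hσ₀ : ∑ k ∈ B, σ {p k} ≤ ∑ k ∈ A, σ {p k} + 0 := by rwa [add_zero]
  have hrange : Set.range p ⊆ Q := hpQ ▸ Set.inter_subset_left
  have hAQ : p '' A ⊆ Q := (Set.image_subset_range p _).trans hrange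
  have hBQ : p '' B ⊆ Q := (Set.image_subset_range p _).trans hrange
  refine ⟨A, B, hAB, hdisj, hA, hB, ?_, sum_sub_div_two_le_sum hAB hdisj _ hω,
    σ.restrict (Q \ p '' B), ω.restrict (Q \ p '' A),
    restrict_diff_image_add_sum_dirac σ hp hBQ, restrict_diff_image_add_sum_dirac ω hp hAQ,
    ?_, ?_, ?_⟩
  · simpa using sum_sub_div_two_le_sum (union_comm A B ▸ hAB) hdisj.symm _ hσ₀
  · refine Set.eq_empty_of_forall_notMem fun q hq => ?_
    rw [commonAtoms_restrict] at hq
    obtain ⟨⟨⟨hqQ, hqB⟩, -, hqA⟩, hq⟩ := hq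
    obtain ⟨k, rfl⟩ : q ∈ Set.range p := hpQ ▸ ⟨hqQ, hq⟩
    rcases mem_union.1 (hAB ▸ mem_univ k) with hk | hk
    · exact hqA (Set.mem_image_of_mem p hk)
    · exact hqB (Set.mem_image_of_mem p hk)
  · rw [Measure.restrict_apply_superset Set.sdiff_subset]
    simpa using sub_div_two_le_measure_diff_image σ hp hdisj.symm hBQ hAQ hσ₀
  · rw [Measure.restrict_apply_superset Set.sdiff_subset, hpQ, iSup_range]
    exact sub_div_two_le_measure_diff_image ω hp hdisj hAQ hBQ hω
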